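/- Let E, E' : L(X) → L(Y) be channels and let V, V' : X → Y ⊗ Z be isometric dilations of E and E' respectively, with a common dilation space Z. Then ‖E − E'‖◇ ≤ 2 · min_U ‖(I_Y ⊗ U)V − V'‖∞, where the minimum is taken over all unitary operators U on Z. -/

import Mathlib

/- ## Preliminaries: matrices as operators, superoperators, channels,
     trace norm, diamond norm, complementary pairs, private and
     correctable subsystems. -/

open Matrix
open scoped ComplexOrder Kronecker

noncomputable section

/-- `L(S)`: the space of linear operators on a finite-dimensional complex
Hilbert space `S` with orthonormal basis indexed by `ι`, represented as
matrices. -/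
abbrev Mat (ι : Type) : Type := Matrix ι ι ℂ

/-- Superoperators, i.e. linear maps `L(S) → L(S')`. -/
abbrev SupOp (ι κ : Type) : Type := Mat ι →ₗ[ℂ] Mat κ

/-- The conjugation superoperator `σ ↦ V σ V†`. -/
def conjMap {ι κ : Type} [Fintype ι] [Fintype κ] (V : Matrix κ ι ℂ) : SupOp ι κ where
  toFun σ := V * σ * Vᴴ
  map_add' σ τ := by
    show V * (σ + τ) * Vᴴ = V * σ * Vᴴ + V * τ * Vᴴ
    rw [Matrix.mul_add, Matrix.add_mul]
  map_smul' c σ := by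
    show V * (c • σ) * Vᴴ = _
    rw [Matrix.mul_smul, Matrix.smul_mul]; rfl

/-- The partial trace over the second (right) tensor factor,
`tr_κ : L(ι ⊗ κ) → L(ι)`. -/
def ptraceRight {ι κ : Type} [Fintype ι] [Fintype κ] : SupOp (ι × κ) ι where
  toFun σ := Matrix.of fun i j => ∑ x, σ (i, x) (j, x)
  map_add' σ τ := by
    ext i j
    simp [Finset.sum_add_distrib]
  map_smul' c σ := by
    ext i j
    simp [Finset.mul_sum]

/-- The partial trace over the first (left) tensor factor,
`tr_ι : L(ι ⊗ κ) → L(κ)`. -/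
def ptraceLeft {ι κ : Type} [Fintype ι] [Fintype κ] : SupOp (ι × κ) κ where
  toFun σ := Matrix.of fun i j => ∑ x, σ (x, i) (x, j)
  map_add' σ τ := by
    ext i j
    simp [Finset.sum_add_distrib]
  map_smul' c σ := by
    ext i j
    simp [Finset.mul_sum]

/-- The extension `id_τ ⊗ Φ` of a superoperator `Φ` by the identity on a
tensor factor `τ` on the left. -/
def lExt {ι κ : Type} (τ : Type) (Φ : SupOp ι κ) : SupOp (τ × ι) (τ × κ) where
  toFun σ := Matrix.of fun p q => Φ (Matrix.of fun a b => σ (p.1, a) (q.1, b)) p.2 q.2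
  map_add' σ τ' := by
    ext p q
    show Φ (Matrix.of fun a b => (σ + τ') (p.1, a) (q.1, b)) p.2 q.2 = _
    rw [show (Matrix.of fun a b => (σ + τ') (p.1, a) (q.1, b)) =
      (Matrix.of fun a b => σ (p.1, a) (q.1, b)) +
        (Matrix.of fun a b => τ' (p.1, a) (q.1, b)) from rfl, map_add]
    rfl
  map_smul' c σ := by
    ext p q
    show Φ (Matrix.of fun a b => (c • σ) (p.1, a) (q.1, b)) p.2 q.2 = _
    rw [show (Matrix.of fun a b => (c • σ) (p.1, a) (q.1, b)) =
      c • (Matrix.of fun a b => σ (p.1, a) (q.1, b)) from rfl, _root_.map_smul]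
    rfl

/-- The extension `Φ ⊗ id_τ` of a superoperator `Φ` by the identity on a
tensor factor `τ` on the right. -/
def rExt {ι κ : Type} (τ : Type) (Φ : SupOp ι κ) : SupOp (ι × τ) (κ × τ) where
  toFun σ := Matrix.of fun p q => Φ (Matrix.of fun a b => σ (a, p.2) (b, q.2)) p.1 q.1
  map_add' σ τ' := by
    ext p q
    show Φ (Matrix.of fun a b => (σ + τ') (a, p.2) (b, q.2)) p.1 q.1 = _
    rw [show (Matrix.of fun a b => (σ + τ') (a, p.2) (b, q.2)) =
      (Matrix.of fun a b => σ (a, p.2) (b, q.2)) +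
        (Matrix.of fun a b => τ' (a, p.2) (b, q.2)) from rfl, map_add]
    rfl
  map_smul' c σ := by
    ext p q
    show Φ (Matrix.of fun a b => (c • σ) (a, p.2) (b, q.2)) p.1 q.1 = _
    rw [show (Matrix.of fun a b => (c • σ) (a, p.2) (b, q.2)) =
      c • (Matrix.of fun a b => σ (a, p.2) (b, q.2)) from rfl, _root_.map_smul]
    rfl

/-- The tensor product `Φ ⊗ Ψ` of two superoperators, as a superoperator
`L(ι₁ ⊗ ι₂) → L(κ₁ ⊗ κ₂)`.  It is the unique linear map with
`(Φ ⊗ Ψ)(σ₁ ⊗ σ₂) = Φ(σ₁) ⊗ Ψ(σ₂)`. -/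
def tensorSup {ι₁ κ₁ ι₂ κ₂ : Type} (Φ : SupOp ι₁ κ₁) (Ψ : SupOp ι₂ κ₂) :
    SupOp (ι₁ × ι₂) (κ₁ × κ₂) :=
  (lExt κ₁ Ψ).comp (rExt ι₂ Φ)

/-- A superoperator is completely positive if all its extensions
`id_k ⊗ Φ` map positive semidefinite matrices to positive semidefinite
matrices. -/
def IsCP {ι κ : Type} [Fintype ι] [Fintype κ] (Φ : SupOp ι κ) : Prop :=
  ∀ (k : ℕ) (σ : Mat (Fin k × ι)), σ.PosSemidef → (lExt (Fin k) Φ σ).PosSemidef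

/-- Trace preservation. -/
def IsTP {ι κ : Type} [Fintype ι] [Fintype κ] (Φ : SupOp ι κ) : Prop :=
  ∀ σ : Mat ι, (Φ σ).trace = σ.trace

/-- A channel is a completely positive trace-preserving linear map. -/
def IsChannel {ι κ : Type} [Fintype ι] [Fintype κ] (Φ : SupOp ι κ) : Prop :=
  IsCP Φ ∧ IsTP Φ

/-- A density operator: positive semidefinite with unit trace. -/
def IsDensity {ι : Type} [Fintype ι] (ω : Mat ι) : Prop :=
  ω.PosSemidef ∧ ω.trace = 1

/-- The trace norm `‖σ‖₁ = tr |σ| = tr √(σ† σ)` of a matrix. -/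
def traceNorm {ι : Type} [Fintype ι] [DecidableEq ι] (σ : Mat ι) : ℝ :=
  ((Matrix.posSemidef_conjTranspose_mul_self σ).1.eigenvectorUnitary.1 *
    Matrix.diagonal (((↑) : ℝ → ℂ) ∘ (√·) ∘ (Matrix.posSemidef_conjTranspose_mul_self σ).1.eigenvalues) *
    (star (Matrix.posSemidef_conjTranspose_mul_self σ).1.eigenvectorUnitary : Matrix ι ι ℂ)).trace.re

/-- The superoperator `1`-norm `‖Φ‖₁ = sup_{‖σ‖₁ ≤ 1} ‖Φ(σ)‖₁`. -/
def supNorm1 {ι κ : Type} [Fintype ι] [DecidableEq ι] [Fintype κ] [DecidableEq κ]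
    (Φ : SupOp ι κ) : ℝ :=
  sSup {x : ℝ | ∃ σ : Mat ι, traceNorm σ ≤ 1 ∧ x = traceNorm (Φ σ)}

/-- The diamond norm `‖Φ‖◇ = sup_{k ≥ 1} ‖id_k ⊗ Φ‖₁`. -/
def diamondNorm {ι κ : Type} [Fintype ι] [DecidableEq ι] [Fintype κ] [DecidableEq κ]
    (Φ : SupOp ι κ) : ℝ :=
  ⨆ k : ℕ, supNorm1 (lExt (Fin (k + 1)) Φ)

/-- The operator norm `‖V‖∞` of a (possibly rectangular) matrix `V`. -/
def opNorm {κ ι : Type} [Fintype κ] [Fintype ι] [DecidableEq ι] (V : Matrix κ ι ℂ) : ℝ :=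
  ‖LinearMap.toContinuousLinearMap (Matrix.toEuclideanLin V)‖

/-- The trace channel `L(S) → L(ℂ)`, where `ℂ` is the one-dimensional
Hilbert space (indexed by `Unit`). -/
def trChannel {ι : Type} [Fintype ι] : SupOp ι Unit where
  toFun σ := Matrix.of fun _ _ => σ.trace
  map_add' σ τ := by ext i j; simp [Matrix.trace_add]
  map_smul' c σ := by ext i j; simp

/-- The deletion channel `σ ↦ tr(σ) · ω` determined by a fixed state `ω`. -/
def deletionTo {ι κ : Type} [Fintype ι] (ω : Mat κ) : SupOp ι κ where
  toFun σ := σ.trace • ω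
  map_add' σ τ := by
    show (σ + τ).trace • ω = σ.trace • ω + τ.trace • ω
    rw [Matrix.trace_add, add_smul]
  map_smul' c σ := by
    show (c • σ).trace • ω = _
    rw [Matrix.trace_smul, smul_smul]; rfl

/-- Channels `E : L(S) → L(S')` and `E♯ : L(S) → L(S'')` form a
complementary pair if there is an isometry `V : S → S' ⊗ S''` with
`E(σ) = tr_{S''}(V σ V†)` and `E♯(σ) = tr_{S'}(V σ V†)`. -/
def ComplementaryPair {ι ι' ι'' : Type} [Fintype ι] [DecidableEq ι]
    [Fintype ι'] [Fintype ι''] (E : SupOp ι ι') (Esharp : SupOp ι ι'') : Prop :=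
  ∃ V : Matrix (ι' × ι'') ι ℂ, Vᴴ * V = 1 ∧
    (∀ σ, E σ = ptraceRight (V * σ * Vᴴ)) ∧
    (∀ σ, Esharp σ = ptraceLeft (V * σ * Vᴴ))

section Subsystems

variable {ι ι' A B : Type} [Fintype ι] [DecidableEq ι] [Fintype ι'] [DecidableEq ι']
  [Fintype A] [DecidableEq A] [Fintype B] [DecidableEq B]

/- A subsystem `B` of `S` (with cofactor `A`), realizing the decomposition
`S = (A ⊗ B) ⊕ (A ⊗ B)^⊥`, is encoded by an isometry
`W : A ⊗ B → S` (i.e. `Wᴴ * W = 1`).  The projection superoperator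
`P_AB : σ ↦ P σ P` is then conjugation by `P = W Wᴴ`, and a superoperator
`Λ : L(A ⊗ B) → L(A' ⊗ B')` is extended to `L(S)` as
`conjMap W' ∘ Λ ∘ conjMap Wᴴ` (where `W'` embeds the output). -/

/-- `B` is an `ε`-private subsystem (with cofactor `A`, embedded in `S` via the
isometry `W : A ⊗ B → S`) for the channel `E : L(S) → L(S')`:
there are a channel `M : L(A) → L(A')` and a deletion channel
`D : L(B) → L(B')` (with `A' ⊗ B'` embedded in `S'` via an isometry `W'`)
such that `‖E ∘ P_AB − M ⊗ D‖◇ ≤ ε`. -/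
def IsPrivateSub (E : SupOp ι ι') (W : Matrix ι (A × B) ℂ) (ε : ℝ) : Prop :=
  ∃ (a' b' : ℕ) (M : SupOp A (Fin a')) (ω : Mat (Fin b'))
    (W' : Matrix ι' (Fin a' × Fin b') ℂ),
      IsChannel M ∧ IsDensity ω ∧ W'ᴴ * W' = 1 ∧
      diamondNorm (E ∘ₗ conjMap (W * Wᴴ)
        - conjMap W' ∘ₗ tensorSup M (deletionTo ω) ∘ₗ conjMap Wᴴ) ≤ ε

/-- `B` is an `ε`-correctable subsystem (with cofactor `A`, embedded in `S` via
the isometry `W : A ⊗ B → S`) for the channel `E : L(S) → L(S')`: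
there are channels `R : L(S') → L(S)` and `N : L(A) → L(A)` with
`‖R ∘ E ∘ P_AB − N ⊗ id_B‖◇ ≤ ε`. -/
def IsCorrectableSub (E : SupOp ι ι') (W : Matrix ι (A × B) ℂ) (ε : ℝ) : Prop :=
  ∃ (R : SupOp ι' ι) (N : SupOp A A),
    IsChannel R ∧ IsChannel N ∧
    diamondNorm (R ∘ₗ E ∘ₗ conjMap (W * Wᴴ)
      - conjMap W ∘ₗ tensorSup N (LinearMap.id : SupOp B B) ∘ₗ conjMap Wᴴ) ≤ ε

/-- `B` is a private subsystem (exact version): `E ∘ P_AB = M ⊗ D`. -/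
def IsPrivateSubExact (E : SupOp ι ι') (W : Matrix ι (A × B) ℂ) : Prop :=
  ∃ (a' b' : ℕ) (M : SupOp A (Fin a')) (ω : Mat (Fin b'))
    (W' : Matrix ι' (Fin a' × Fin b') ℂ),
      IsChannel M ∧ IsDensity ω ∧ W'ᴴ * W' = 1 ∧
      E ∘ₗ conjMap (W * Wᴴ)
        = conjMap W' ∘ₗ tensorSup M (deletionTo ω) ∘ₗ conjMap Wᴴ

/-- `B` is a correctable subsystem (exact version): `R ∘ E ∘ P_AB = N ⊗ id_B`. -/
def IsCorrectableSubExact (E : SupOp ι ι') (W : Matrix ι (A × B) ℂ) : Prop :=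
  ∃ (R : SupOp ι' ι) (N : SupOp A A),
    IsChannel R ∧ IsChannel N ∧
    R ∘ₗ E ∘ₗ conjMap (W * Wᴴ)
      = conjMap W ∘ₗ tensorSup N (LinearMap.id : SupOp B B) ∘ₗ conjMap Wᴴ

end Subsystems

set_option linter.unusedSectionVars false
namespace DilAux
open scoped ComplexInnerProductSpace

def ev {ι : Type} (x : ι → ℂ) : EuclideanSpace ℂ ι := (WithLp.equiv 2 (ι → ℂ)).symm x

variable {ι κ μ : Type} [Fintype ι] [DecidableEq ι] [Fintype κ] [DecidableEq κ]
  [Fintype μ] [DecidableEq μ]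

lemma ev_apply (x : ι → ℂ) (i : ι) : ev x i = x i := rfl

lemma norm_ev_sq (x : ι → ℂ) : ‖ev x‖ ^ 2 = ∑ i, ‖x i‖ ^ 2 := by
  rw [EuclideanSpace.norm_eq, Real.sq_sqrt (by positivity)]
  rfl

lemma inner_ev (x y : ι → ℂ) : ⟪ev x, ev y⟫ = star x ⬝ᵥ y := by
  show y ⬝ᵥ star x = _; exact dotProduct_comm _ _

lemma opNorm_nonneg (M : Matrix κ ι ℂ) : 0 ≤ opNorm M := norm_nonneg _

lemma mulVec_norm_le (M : Matrix κ ι ℂ) (x : ι → ℂ) :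
    ‖ev (M *ᵥ x)‖ ≤ opNorm M * ‖ev x‖ := by
  have h := (LinearMap.toContinuousLinearMap (Matrix.toEuclideanLin M)).le_opNorm (ev x)
  simpa [ev, opNorm, Matrix.toLin'_apply] using h

lemma opNorm_le_bound (M : Matrix κ ι ℂ) {c : ℝ} (hc : 0 ≤ c)
    (h : ∀ x : ι → ℂ, ‖ev (M *ᵥ x)‖ ≤ c * ‖ev x‖) : opNorm M ≤ c := by
  refine ContinuousLinearMap.opNorm_le_bound _ hc fun x => ?_
  have := h (WithLp.equiv 2 (ι → ℂ) x)
  simpa [ev, Matrix.toEuclideanLin_apply, Matrix.toLin'_apply] using this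

lemma sum_sq_mulVec_le (M : Matrix κ ι ℂ) (x : ι → ℂ) :
    ∑ i, ‖(M *ᵥ x) i‖ ^ 2 ≤ opNorm M ^ 2 * ∑ j, ‖x j‖ ^ 2 := by
  rw [← norm_ev_sq, ← norm_ev_sq]
  calc ‖ev (M *ᵥ x)‖ ^ 2 ≤ (opNorm M * ‖ev x‖) ^ 2 := by
        apply pow_le_pow_left₀ (norm_nonneg _) (mulVec_norm_le M x)
    _ = opNorm M ^ 2 * ‖ev x‖ ^ 2 := by ring

lemma opNorm_le_of_sq (M : Matrix κ ι ℂ) {c : ℝ} (hc : 0 ≤ c)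
    (h : ∀ x : ι → ℂ, ∑ i, ‖(M *ᵥ x) i‖ ^ 2 ≤ c ^ 2 * ∑ j, ‖x j‖ ^ 2) :
    opNorm M ≤ c := by
  refine opNorm_le_bound M hc fun x => ?_
  have h2 : ‖ev (M *ᵥ x)‖ ^ 2 ≤ (c * ‖ev x‖) ^ 2 := by
    rw [norm_ev_sq, mul_pow, norm_ev_sq]; exact h x
  have hb : (0:ℝ) ≤ c * ‖ev x‖ := by positivity
  nlinarith [norm_nonneg (ev (M *ᵥ x))]

lemma opNorm_mul_le (A : Matrix μ κ ℂ) (B : Matrix κ ι ℂ) :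
    opNorm (A * B) ≤ opNorm A * opNorm B := by
  refine opNorm_le_bound _ (mul_nonneg (opNorm_nonneg _) (opNorm_nonneg _)) fun x => ?_
  rw [← Matrix.mulVec_mulVec]
  calc ‖ev (A *ᵥ (B *ᵥ x))‖ ≤ opNorm A * ‖ev (B *ᵥ x)‖ := mulVec_norm_le _ _
    _ ≤ opNorm A * (opNorm B * ‖ev x‖) := by
        exact mul_le_mul_of_nonneg_left (mulVec_norm_le _ _) (opNorm_nonneg _)
    _ = opNorm A * opNorm B * ‖ev x‖ := by ring

lemma re_dot_self (x : ι → ℂ) : (star x ⬝ᵥ x).re = ∑ i, ‖x i‖ ^ 2 := by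
  rw [dotProduct, Complex.re_sum]
  refine Finset.sum_congr rfl fun i _ => ?_
  have : (star x) i * x i = Complex.normSq (x i) := by
    simp [Complex.normSq_eq_conj_mul_self]
  rw [this, Complex.ofReal_re, Complex.normSq_eq_norm_sq]

set_option maxHeartbeats 1000000 in
lemma trace_eq_sum_dot (Q : Matrix ι ι ℂ) (hQ : Q * Qᴴ = 1) (M : Mat ι) :
    M.trace = ∑ j, star (fun p => Q p j) ⬝ᵥ (M *ᵥ fun p => Q p j) := by
  have : ∑ j, star (fun p => Q p j) ⬝ᵥ (M *ᵥ fun p => Q p j) = (Qᴴ * M * Q).trace := by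
    rw [Matrix.trace]
    refine Finset.sum_congr rfl fun j _ => ?_
    simp only [Matrix.diag_apply, Matrix.mul_apply, dotProduct, Matrix.mulVec,
      dotProduct, Matrix.conjTranspose_apply, Pi.star_apply, Finset.sum_mul,
      Finset.mul_sum, RCLike.star_def]
    rw [Finset.sum_comm]
    refine Finset.sum_congr rfl fun p _ => Finset.sum_congr rfl fun q _ => by ring
  rw [this, Matrix.trace_mul_cycle, hQ, Matrix.one_mul]

/-- data for the SVD-style argument -/
def psdCTA (A : Mat ι) : (Aᴴ * A).PosSemidef := Matrix.posSemidef_conjTranspose_mul_self A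

lemma traceNorm_eq_sum (A : Mat ι) :
    traceNorm A = ∑ i, Real.sqrt ((psdCTA A).1.eigenvalues i) := by
  have h := psdCTA A
  show ((psdCTA A).1.eigenvectorUnitary.1 *
    Matrix.diagonal (((↑) : ℝ → ℂ) ∘ (√·) ∘ (psdCTA A).1.eigenvalues) *
    (star (psdCTA A).1.eigenvectorUnitary : Matrix ι ι ℂ)).trace.re = _
  rw [Matrix.trace_mul_cycle]
  rw [show (star (psdCTA A).1.eigenvectorUnitary : Matrix ι ι ℂ) *
      ((psdCTA A).1.eigenvectorUnitary : Matrix ι ι ℂ) = 1 from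
    Unitary.coe_star_mul_self _, Matrix.one_mul, Matrix.trace_diagonal]
  rw [Complex.re_sum]
  simp

lemma traceNorm_nonneg (A : Mat ι) : 0 ≤ traceNorm A := by
  rw [traceNorm_eq_sum]
  exact Finset.sum_nonneg fun i _ => Real.sqrt_nonneg _

section svd
variable (A : Mat ι)

def svdV (j : ι) : ι → ℂ := fun p => (psdCTA A).1.eigenvectorBasis j p
def svdW (j : ι) : ι → ℂ := A *ᵥ svdV A j

lemma ev_svdV (j : ι) : ev (svdV A j) = (psdCTA A).1.eigenvectorBasis j := rfl

lemma dot_svdV (j k : ι) : star (svdV A j) ⬝ᵥ svdV A k = if j = k then 1 else 0 := by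
  have := orthonormal_iff_ite.mp ((psdCTA A).1.eigenvectorBasis).orthonormal j k
  rw [← inner_ev, ev_svdV, ev_svdV]
  exact this

lemma dot_svdW (j k : ι) :
    star (svdW A j) ⬝ᵥ svdW A k = if j = k then ((psdCTA A).1.eigenvalues k : ℂ) else 0 := by
  unfold svdW
  rw [show star (A *ᵥ svdV A j) = star (svdV A j) ᵥ* Aᴴ from Matrix.star_mulVec _ _,
    ← Matrix.dotProduct_mulVec, Matrix.mulVec_mulVec]
  rw [show (Aᴴ * A) *ᵥ svdV A k = ((psdCTA A).1.eigenvalues k : ℂ) • svdV A k from by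
    have h := (psdCTA A).1.mulVec_eigenvectorBasis k
    refine Eq.trans h ?_
    funext p
    simp [svdV, Complex.real_smul]]
  rw [dotProduct_smul, dot_svdV]
  simp only [smul_eq_mul]
  split <;> simp

lemma norm_ev_svdW (j : ι) :
    ‖ev (svdW A j)‖ = Real.sqrt ((psdCTA A).1.eigenvalues j) := by
  have h1 : ‖ev (svdW A j)‖ ^ 2 = ((psdCTA A).1.eigenvalues j) := by
    rw [norm_ev_sq, ← re_dot_self, dot_svdW]
    simp
  rw [← h1, Real.sqrt_sq (norm_nonneg _)]

lemma trace_mul_eq_sum_dot (B : Mat ι) :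
    (B * A).trace = ∑ j, star (svdV A j) ⬝ᵥ (B *ᵥ svdW A j) := by
  have hQ : ((psdCTA A).1.eigenvectorUnitary : Matrix ι ι ℂ) *
      ((psdCTA A).1.eigenvectorUnitary : Matrix ι ι ℂ)ᴴ = 1 :=
    Unitary.coe_mul_star_self _
  rw [trace_eq_sum_dot _ hQ]
  refine Finset.sum_congr rfl fun j _ => ?_
  have hcol : (fun p => ((psdCTA A).1.eigenvectorUnitary : Matrix ι ι ℂ) p j) = svdV A j := by
    funext p
    exact (psdCTA A).1.eigenvectorUnitary_apply p j
  rw [hcol, ← Matrix.mulVec_mulVec]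
  rfl

/-- D1 : upper duality bound -/
lemma abs_trace_mul_le (B : Mat ι) :
    ‖(B * A).trace‖ ≤ opNorm B * traceNorm A := by
  rw [trace_mul_eq_sum_dot, traceNorm_eq_sum, Finset.mul_sum]
  refine le_trans (norm_sum_le _ _) (Finset.sum_le_sum fun j _ => ?_)
  have h1 : ‖star (svdV A j) ⬝ᵥ (B *ᵥ svdW A j)‖ ≤
      ‖ev (svdV A j)‖ * ‖ev (B *ᵥ svdW A j)‖ := by
    rw [← inner_ev (svdV A j) (B *ᵥ svdW A j)]
    exact norm_inner_le_norm (𝕜 := ℂ) _ _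
  have h2 : ‖ev (svdV A j)‖ = 1 := ((psdCTA A).1.eigenvectorBasis).orthonormal.1 j
  have h3 : ‖ev (B *ᵥ svdW A j)‖ ≤ opNorm B * Real.sqrt ((psdCTA A).1.eigenvalues j) := by
    rw [← norm_ev_svdW]
    exact mulVec_norm_le _ _
  calc ‖star (svdV A j) ⬝ᵥ (B *ᵥ svdW A j)‖ ≤
      ‖ev (svdV A j)‖ * ‖ev (B *ᵥ svdW A j)‖ := h1
    _ ≤ 1 * (opNorm B * Real.sqrt ((psdCTA A).1.eigenvalues j)) := by
        rw [h2]; exact mul_le_mul_of_nonneg_left h3 (by norm_num)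
    _ = opNorm B * Real.sqrt ((psdCTA A).1.eigenvalues j) := by ring

end svd

section dual
variable (A : Mat ι)

def goodSet : Finset ι := Finset.univ.filter (fun j => (psdCTA A).1.eigenvalues j ≠ 0)

def optB : Mat ι :=
  ∑ j ∈ goodSet A, ((Real.sqrt ((psdCTA A).1.eigenvalues j) : ℝ)⁻¹ : ℂ) •
    Matrix.vecMulVec (svdV A j) (star (svdW A j))

lemma optB_mulVec (x : ι → ℂ) : optB A *ᵥ x = fun i =>
    ∑ j ∈ goodSet A, ((Real.sqrt ((psdCTA A).1.eigenvalues j) : ℝ)⁻¹ : ℂ) *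
      (star (svdW A j) ⬝ᵥ x) * svdV A j i := by
  funext i
  show ∑ q, optB A i q * x q = _
  have : ∀ q, optB A i q = ∑ j ∈ goodSet A,
      ((Real.sqrt ((psdCTA A).1.eigenvalues j) : ℝ)⁻¹ : ℂ) *
        (svdV A j i * star (svdW A j) q) := by
    intro q
    simp [optB, Matrix.sum_apply, Matrix.vecMulVec_apply]
  simp_rw [this, Finset.sum_mul]
  rw [Finset.sum_comm]
  refine Finset.sum_congr rfl fun j _ => ?_
  simp_rw [dotProduct, Finset.mul_sum, Finset.sum_mul]
  refine Finset.sum_congr rfl fun q _ => by ring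

lemma optB_mulVec_svdW (k : ι) :
    optB A *ᵥ svdW A k = fun i =>
      (Real.sqrt ((psdCTA A).1.eigenvalues k) : ℂ) * svdV A k i := by
  rw [optB_mulVec]
  funext i
  rw [Finset.sum_congr rfl (fun j hj => by rw [dot_svdW])]
  by_cases hk : k ∈ goodSet A
  · rw [Finset.sum_eq_single k]
    · rw [if_pos rfl]
      have he : (0:ℝ) ≤ (psdCTA A).1.eigenvalues k := (psdCTA A).eigenvalues_nonneg k
      have hne : (psdCTA A).1.eigenvalues k ≠ 0 := by
        simpa [goodSet] using hk
      have hs : Real.sqrt ((psdCTA A).1.eigenvalues k) ≠ 0 := by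
        simpa [Real.sqrt_eq_zero he] using hne
      have : ((psdCTA A).1.eigenvalues k : ℂ) =
          (Real.sqrt ((psdCTA A).1.eigenvalues k) : ℂ) *
          (Real.sqrt ((psdCTA A).1.eigenvalues k) : ℂ) := by
        rw [← Complex.ofReal_mul, Real.mul_self_sqrt he]
      rw [this]
      have hsC : ((Real.sqrt ((psdCTA A).1.eigenvalues k) : ℝ) : ℂ) ≠ 0 := by
        exact_mod_cast hs
      field_simp
      try ring
    · intro j hj hne
      rw [if_neg hne, mul_zero, zero_mul]
    · intro h; exact absurd hk h
  · have hzero : (psdCTA A).1.eigenvalues k = 0 := by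
      by_contra hne
      exact hk (by simp [goodSet, hne])
    have hsum : ∑ j ∈ goodSet A, ((Real.sqrt ((psdCTA A).1.eigenvalues j) : ℝ)⁻¹ : ℂ) *
        (if j = k then ((psdCTA A).1.eigenvalues k : ℂ) else 0) * svdV A j i = 0 := by
      refine Finset.sum_eq_zero fun j hj => ?_
      have hne : j ≠ k := fun h => hk (h ▸ hj)
      rw [if_neg hne, mul_zero, zero_mul]
    rw [hsum, hzero]
    simp

lemma trace_optB : ((optB A) * A).trace = ((traceNorm A : ℝ) : ℂ) := by
  rw [trace_mul_eq_sum_dot, traceNorm_eq_sum]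
  push_cast
  refine Finset.sum_congr rfl fun k _ => ?_
  rw [optB_mulVec_svdW]
  have : (fun i => (Real.sqrt ((psdCTA A).1.eigenvalues k) : ℂ) * svdV A k i)
      = (Real.sqrt ((psdCTA A).1.eigenvalues k) : ℂ) • svdV A k := rfl
  rw [this, dotProduct_smul, dot_svdV]
  simp

lemma opNorm_optB : opNorm (optB A) ≤ 1 := by
  refine opNorm_le_of_sq _ zero_le_one fun x => ?_
  rw [one_pow, one_mul]
  set e := (psdCTA A).1.eigenvalues with he
  set s := fun j => Real.sqrt (e j) with hs
  set c := fun j => ((s j)⁻¹ : ℂ) * (star (svdW A j) ⬝ᵥ x) with hc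
  -- step 1 : ∑ i ‖(optB *ᵥ x) i‖² = ∑_{k ∈ goodSet} ‖c k‖²
  have hrepr : ∀ k, star (svdV A k) ⬝ᵥ (optB A *ᵥ x)
      = if k ∈ goodSet A then c k else 0 := by
    intro k
    rw [optB_mulVec]
    have : star (svdV A k) ⬝ᵥ (fun i => ∑ j ∈ goodSet A,
        ((s j)⁻¹ : ℂ) * (star (svdW A j) ⬝ᵥ x) * svdV A j i)
        = ∑ j ∈ goodSet A, ((s j)⁻¹ : ℂ) * (star (svdW A j) ⬝ᵥ x) *
            (star (svdV A k) ⬝ᵥ svdV A j) := by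
      simp_rw [dotProduct, Finset.mul_sum]
      rw [Finset.sum_comm]
      refine Finset.sum_congr rfl fun j _ => Finset.sum_congr rfl fun i _ => by
        simp; ring
    rw [this]
    by_cases hk : k ∈ goodSet A
    · rw [Finset.sum_eq_single k]
      · rw [dot_svdV, if_pos rfl, if_pos hk, mul_one]
      · intro j hj hne
        rw [dot_svdV, if_neg (fun h => hne h.symm), mul_zero]
      · intro h; exact absurd hk h
    · rw [if_neg hk, Finset.sum_eq_zero]
      intro j hj
      rw [dot_svdV, if_neg (fun h => hk (by rw [h]; exact hj)), mul_zero]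
  have hnormsq : ∑ i, ‖(optB A *ᵥ x) i‖ ^ 2 = ∑ k ∈ goodSet A, ‖c k‖ ^ 2 := by
    set y := ev (optB A *ᵥ x) with hy
    have h1 : ∑ i, ‖(optB A *ᵥ x) i‖ ^ 2 = ‖y‖ ^ 2 := (norm_ev_sq _).symm
    have h2 : ‖y‖ = ‖((psdCTA A).1.eigenvectorBasis).repr y‖ :=
      (LinearIsometryEquiv.norm_map _ _).symm
    have h3 : ‖((psdCTA A).1.eigenvectorBasis).repr y‖ ^ 2
        = ∑ k, ‖((psdCTA A).1.eigenvectorBasis).repr y k‖ ^ 2 := by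
      rw [EuclideanSpace.norm_eq, Real.sq_sqrt (by positivity)]
    have h4 : ∀ k, ((psdCTA A).1.eigenvectorBasis).repr y k
        = if k ∈ goodSet A then c k else 0 := by
      intro k
      rw [OrthonormalBasis.repr_apply_apply, ← ev_svdV, inner_ev]
      exact hrepr k
    rw [h1, h2, h3]
    rw [Finset.sum_congr rfl (fun k _ => by rw [h4])]
    have hsplit : ∀ k, ‖if k ∈ goodSet A then c k else 0‖ ^ 2
        = if k ∈ goodSet A then ‖c k‖ ^ 2 else 0 := fun k => by split <;> simp
    rw [Finset.sum_congr rfl (fun k _ => hsplit k), Finset.sum_ite_mem, Finset.univ_inter]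
  -- step 2 : Bessel's inequality
  have hbessel : ∑ k ∈ goodSet A, ‖c k‖ ^ 2 ≤ ∑ j, ‖x j‖ ^ 2 := by
    set uu : {j // j ∈ goodSet A} → EuclideanSpace ℂ ι :=
      fun j => ((s j.1)⁻¹ : ℂ) • ev (svdW A j.1) with huu
    have hon : Orthonormal ℂ uu := by
      rw [orthonormal_iff_ite]
      intro j k
      rw [huu]
      simp only [inner_smul_left, inner_smul_right, inner_ev]
      rw [dot_svdW]
      have hjk : (j.1 = k.1) = (j = k) := by
        exact propext Subtype.ext_iff.symm
      by_cases h : j = k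
      · subst h
        rw [if_pos rfl, if_pos rfl]
        have hne : e j.1 ≠ 0 := by
          have h2 := j.2
          simp only [goodSet, Finset.mem_filter] at h2
          exact h2.2
        have hnn : (0:ℝ) ≤ e j.1 := (psdCTA A).eigenvalues_nonneg j.1
        have hsne : s j.1 ≠ 0 := by
          simpa [hs, Real.sqrt_eq_zero hnn] using hne
        have hsC : ((s j.1 : ℝ) : ℂ) ≠ 0 := by exact_mod_cast hsne
        have : ((e j.1 : ℝ) : ℂ) = ((s j.1 : ℝ) : ℂ) * ((s j.1 : ℝ) : ℂ) := by
          rw [← Complex.ofReal_mul, hs, Real.mul_self_sqrt hnn]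
        rw [this]
        rw [map_inv₀, Complex.conj_ofReal]
        field_simp
      · rw [if_neg h, if_neg (fun hh => h (Subtype.ext hh)), mul_zero, mul_zero]
    have hb := hon.sum_inner_products_le (s := Finset.univ) (ev x)
    have hxnorm : ‖ev x‖ ^ 2 = ∑ j, ‖x j‖ ^ 2 := norm_ev_sq x
    have hterm : ∀ j : {j // j ∈ goodSet A}, (inner ℂ (uu j) (ev x) : ℂ) = c j.1 := by
      intro j
      rw [huu]
      simp only [inner_smul_left, inner_ev]
      rw [map_inv₀, Complex.conj_ofReal, hc]
    calc ∑ k ∈ goodSet A, ‖c k‖ ^ 2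
        = ∑ j : {j // j ∈ goodSet A}, ‖c j.1‖ ^ 2 :=
          (Finset.sum_coe_sort (goodSet A) (fun k => ‖c k‖ ^ 2)).symm
      _ = ∑ j : {j // j ∈ goodSet A}, ‖(inner ℂ (uu j) (ev x) : ℂ)‖ ^ 2 := by
          refine Finset.sum_congr rfl fun j _ => by rw [hterm]
      _ ≤ ‖ev x‖ ^ 2 := hb
      _ = ∑ j, ‖x j‖ ^ 2 := hxnorm
  rw [hnormsq]
  exact hbessel

lemma exists_dual : ∃ B : Mat ι, opNorm B ≤ 1 ∧ (B * A).trace = ((traceNorm A : ℝ) : ℂ) :=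
  ⟨optB A, opNorm_optB A, trace_optB A⟩

end dual

lemma traceNorm_add_le (M N : Mat ι) :
    traceNorm (M + N) ≤ traceNorm M + traceNorm N := by
  obtain ⟨B, hB1, hB2⟩ := exists_dual (M + N)
  have h0 : traceNorm (M + N) = ((B * M).trace + (B * N).trace).re := by
    rw [← Matrix.trace_add, ← Matrix.mul_add, hB2, Complex.ofReal_re]
  rw [h0, Complex.add_re]
  have h1 : ((B * M).trace).re ≤ traceNorm M := by
    calc ((B * M).trace).re ≤ ‖(B * M).trace‖ := Complex.re_le_norm _
      _ ≤ opNorm B * traceNorm M := abs_trace_mul_le M B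
      _ ≤ 1 * traceNorm M := mul_le_mul_of_nonneg_right hB1 (traceNorm_nonneg M)
      _ = traceNorm M := one_mul _
  have h2 : ((B * N).trace).re ≤ traceNorm N := by
    calc ((B * N).trace).re ≤ ‖(B * N).trace‖ := Complex.re_le_norm _
      _ ≤ opNorm B * traceNorm N := abs_trace_mul_le N B
      _ ≤ 1 * traceNorm N := mul_le_mul_of_nonneg_right hB1 (traceNorm_nonneg N)
      _ = traceNorm N := one_mul _
  exact add_le_add h1 h2

lemma opNorm_conjTranspose_le (A : Matrix κ ι ℂ) : opNorm Aᴴ ≤ opNorm A := by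
  refine opNorm_le_bound _ (opNorm_nonneg A) fun x => ?_
  set t := ‖ev (Aᴴ *ᵥ x)‖ with ht
  have h1 : t ^ 2 = (star (Aᴴ *ᵥ x) ⬝ᵥ (Aᴴ *ᵥ x)).re := by
    rw [ht, norm_ev_sq, re_dot_self]
  have h2 : star (Aᴴ *ᵥ x) ⬝ᵥ (Aᴴ *ᵥ x) = star x ⬝ᵥ (A *ᵥ (Aᴴ *ᵥ x)) := by
    rw [Matrix.star_mulVec, Matrix.conjTranspose_conjTranspose,
      ← Matrix.dotProduct_mulVec]
  have h3 : t ^ 2 ≤ ‖ev x‖ * (opNorm A * t) := by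
    rw [h1, h2]
    calc (star x ⬝ᵥ (A *ᵥ (Aᴴ *ᵥ x))).re
        ≤ ‖star x ⬝ᵥ (A *ᵥ (Aᴴ *ᵥ x))‖ := Complex.re_le_norm _
      _ ≤ ‖ev x‖ * ‖ev (A *ᵥ (Aᴴ *ᵥ x))‖ := by
          rw [← inner_ev]
          exact norm_inner_le_norm (𝕜 := ℂ) _ _
      _ ≤ ‖ev x‖ * (opNorm A * t) := by
          exact mul_le_mul_of_nonneg_left (mulVec_norm_le _ _) (norm_nonneg _)
  by_cases h0 : t = 0
  · rw [h0]; exact mul_nonneg (opNorm_nonneg A) (norm_nonneg _)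
  · have htpos : 0 < t := lt_of_le_of_ne (norm_nonneg _) (Ne.symm h0)
    have := h3
    nlinarith [norm_nonneg (ev x), opNorm_nonneg A]

lemma traceNorm_conj_le (C D : Matrix κ ι ℂ) (ρ : Mat ι) :
    traceNorm (C * ρ * Dᴴ) ≤ opNorm C * opNorm D * traceNorm ρ := by
  obtain ⟨B, hB1, hB2⟩ := exists_dual (C * ρ * Dᴴ)
  have h0 : (B * (C * ρ * Dᴴ)).trace = ((Dᴴ * B * C) * ρ).trace := by
    rw [show B * (C * ρ * Dᴴ) = (B * C * ρ) * Dᴴ by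
      rw [← Matrix.mul_assoc, ← Matrix.mul_assoc]]
    rw [Matrix.trace_mul_comm, ← Matrix.mul_assoc, ← Matrix.mul_assoc]
  have hre : traceNorm (C * ρ * Dᴴ) = (((Dᴴ * B * C) * ρ).trace).re := by
    rw [← h0, hB2, Complex.ofReal_re]
  have hop : opNorm (Dᴴ * B * C) ≤ opNorm D * opNorm C := by
    calc opNorm (Dᴴ * B * C) ≤ opNorm (Dᴴ * B) * opNorm C := opNorm_mul_le _ _
      _ ≤ (opNorm Dᴴ * opNorm B) * opNorm C :=
          mul_le_mul_of_nonneg_right (opNorm_mul_le _ _) (opNorm_nonneg _)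
      _ ≤ (opNorm D * 1) * opNorm C := by
          refine mul_le_mul_of_nonneg_right ?_ (opNorm_nonneg _)
          exact mul_le_mul (opNorm_conjTranspose_le D) hB1 (opNorm_nonneg _) (opNorm_nonneg _)
      _ = opNorm D * opNorm C := by ring
  rw [hre]
  calc (((Dᴴ * B * C) * ρ).trace).re
      ≤ ‖((Dᴴ * B * C) * ρ).trace‖ := Complex.re_le_norm _
    _ ≤ opNorm (Dᴴ * B * C) * traceNorm ρ := abs_trace_mul_le ρ _
    _ ≤ (opNorm D * opNorm C) * traceNorm ρ :=
        mul_le_mul_of_nonneg_right hop (traceNorm_nonneg ρ)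
    _ = opNorm C * opNorm D * traceNorm ρ := by ring

lemma opNorm_isometry_le (V : Matrix κ ι ℂ) (hV : Vᴴ * V = 1) : opNorm V ≤ 1 := by
  refine opNorm_le_of_sq _ zero_le_one fun x => ?_
  rw [one_pow, one_mul]
  have h1 : ∑ i, ‖(V *ᵥ x) i‖ ^ 2 = (star (V *ᵥ x) ⬝ᵥ (V *ᵥ x)).re := (re_dot_self _).symm
  have h2 : star (V *ᵥ x) ⬝ᵥ (V *ᵥ x) = star x ⬝ᵥ x := by
    rw [Matrix.star_mulVec, ← Matrix.dotProduct_mulVec, Matrix.mulVec_mulVec, hV,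
      Matrix.one_mulVec]
  rw [h1, h2, re_dot_self]

section structural

variable {Z n X Y : Type} [Fintype Z] [DecidableEq Z] [Fintype n] [DecidableEq n]
  [Fintype X] [DecidableEq X] [Fintype Y] [DecidableEq Y]

lemma kron_one_mulVec (B : Mat ι) (x : (ι × Z) → ℂ) (i : ι) (z : Z) :
    ((B ⊗ₖ (1 : Mat Z)) *ᵥ x) (i, z) = (B *ᵥ fun y => x (y, z)) i := by
  simp only [Matrix.mulVec, dotProduct, Fintype.sum_prod_type,
    Matrix.kroneckerMap_apply, Matrix.one_apply, mul_ite, mul_one, mul_zero, ite_mul, zero_mul]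
  refine Finset.sum_congr rfl fun y _ => ?_
  simp

lemma opNorm_kron_one_le (B : Mat ι) : opNorm (B ⊗ₖ (1 : Mat Z)) ≤ opNorm B := by
  refine opNorm_le_of_sq _ (opNorm_nonneg B) fun x => ?_
  calc ∑ p : ι × Z, ‖((B ⊗ₖ (1 : Mat Z)) *ᵥ x) p‖ ^ 2
      = ∑ z : Z, ∑ i : ι, ‖(B *ᵥ fun y => x (y, z)) i‖ ^ 2 := by
        rw [Fintype.sum_prod_type_right]
        exact Finset.sum_congr rfl fun z _ => Finset.sum_congr rfl fun i _ => by
          rw [kron_one_mulVec]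
    _ ≤ ∑ z : Z, opNorm B ^ 2 * ∑ y : ι, ‖x (y, z)‖ ^ 2 :=
        Finset.sum_le_sum fun z _ => sum_sq_mulVec_le B _
    _ = opNorm B ^ 2 * ∑ p : ι × Z, ‖x p‖ ^ 2 := by
        rw [← Finset.mul_sum, Fintype.sum_prod_type_right]

lemma trace_mul_ptraceRight (B : Mat ι) (ρ : Mat (ι × Z)) :
    (B * ptraceRight ρ).trace = ((B ⊗ₖ (1 : Mat Z)) * ρ).trace := by
  have lhs : (B * ptraceRight ρ).trace = ∑ i, ∑ j, ∑ z, B i j * ρ (j, z) (i, z) := by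
    simp [Matrix.trace, Matrix.mul_apply, ptraceRight, Finset.mul_sum]
  have rhs : ((B ⊗ₖ (1 : Mat Z)) * ρ).trace
      = ∑ i, ∑ z, ∑ j, B i j * ρ (j, z) (i, z) := by
    simp only [Matrix.trace, Matrix.diag_apply, Matrix.mul_apply, Fintype.sum_prod_type,
      Matrix.kroneckerMap_apply, Matrix.one_apply, mul_ite, mul_one, mul_zero, ite_mul,
      zero_mul, Finset.sum_ite_eq, Finset.sum_ite_eq', Finset.mem_univ, if_true]
  rw [lhs, rhs]
  exact Finset.sum_congr rfl fun i _ => Finset.sum_comm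

lemma traceNorm_ptraceRight_le (ρ : Mat (ι × Z)) :
    traceNorm (ptraceRight ρ : Mat ι) ≤ traceNorm ρ := by
  obtain ⟨B, hB1, hB2⟩ := exists_dual (ptraceRight ρ : Mat ι)
  have hre : traceNorm (ptraceRight ρ : Mat ι) = (((B ⊗ₖ (1 : Mat Z)) * ρ).trace).re := by
    rw [← trace_mul_ptraceRight, hB2, Complex.ofReal_re]
  rw [hre]
  calc (((B ⊗ₖ (1 : Mat Z)) * ρ).trace).re
      ≤ ‖((B ⊗ₖ (1 : Mat Z)) * ρ).trace‖ := Complex.re_le_norm _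
    _ ≤ opNorm (B ⊗ₖ (1 : Mat Z)) * traceNorm ρ := abs_trace_mul_le ρ _
    _ ≤ 1 * traceNorm ρ := by
        refine mul_le_mul_of_nonneg_right ?_ (traceNorm_nonneg ρ)
        exact le_trans (opNorm_kron_one_le B) hB1
    _ = traceNorm ρ := one_mul _

/-- lift of a dilation isometry to the extended system -/
def liftV (n : Type) [DecidableEq n] (V : Matrix (Y × Z) X ℂ) : Matrix ((n × Y) × Z) (n × X) ℂ :=
  Matrix.of fun pz qx => if pz.1.1 = qx.1 then V (pz.1.2, pz.2) qx.2 else 0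

lemma liftV_sub (V V' : Matrix (Y × Z) X ℂ) :
    liftV (Y := Y) n V - liftV n V' = liftV n (V - V') := by
  ext ⟨⟨p, y⟩, z⟩ ⟨q, x⟩
  simp only [liftV, Matrix.sub_apply, Matrix.of_apply]
  split <;> simp

lemma liftV_isometry (V : Matrix (Y × Z) X ℂ) (hV : Vᴴ * V = 1) :
    (liftV n V)ᴴ * liftV n V = 1 := by
  ext ⟨q, x⟩ ⟨q', x'⟩
  have h := congrFun (congrFun hV x) x'
  simp only [Matrix.mul_apply, Matrix.conjTranspose_apply, Matrix.one_apply,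
    Fintype.sum_prod_type] at h
  simp only [Matrix.mul_apply, Matrix.conjTranspose_apply, liftV, Matrix.of_apply,
    Fintype.sum_prod_type, apply_ite (star : ℂ → ℂ), star_zero, ite_mul, zero_mul,
    mul_ite, mul_zero]
  by_cases hqq : q = q'
  · subst hqq
    rw [Finset.sum_eq_single q]
    · simpa [Matrix.one_apply, Prod.ext_iff] using h
    · intro p _ hp
      refine Finset.sum_eq_zero fun y _ => Finset.sum_eq_zero fun z _ => ?_
      rw [if_neg hp]
    · intro hq; exact absurd (Finset.mem_univ q) hq
  · have hone : (1 : Mat (n × X)) (q, x) (q', x') = 0 := by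
      simp [Matrix.one_apply, Prod.ext_iff, hqq]
    rw [hone]
    refine Finset.sum_eq_zero fun p _ => Finset.sum_eq_zero fun y _ =>
      Finset.sum_eq_zero fun z _ => ?_
    by_cases hp : p = q'
    · rw [if_pos hp, if_neg (fun hh : p = q => hqq (hh.symm.trans hp))]
    · rw [if_neg hp]

lemma liftV_mulVec (V : Matrix (Y × Z) X ℂ) (x : (n × X) → ℂ) (p : n) (y : Y) (z : Z) :
    (liftV n V *ᵥ x) ((p, y), z) = (V *ᵥ fun x' => x (p, x')) (y, z) := by
  simp only [Matrix.mulVec, dotProduct, liftV, Matrix.of_apply,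
    Fintype.sum_prod_type, ite_mul, zero_mul]
  rw [Finset.sum_eq_single p]
  · simp [Matrix.mulVec, dotProduct]
  · intro q _ hq
    exact Finset.sum_eq_zero fun x' _ => by rw [if_neg (fun hh => hq hh.symm)]
  · intro hh; exact absurd (Finset.mem_univ p) hh

lemma opNorm_liftV_le (V : Matrix (Y × Z) X ℂ) : opNorm (liftV (Y := Y) n V) ≤ opNorm V := by
  refine opNorm_le_of_sq _ (opNorm_nonneg V) fun x => ?_
  calc ∑ p : (n × Y) × Z, ‖(liftV n V *ᵥ x) p‖ ^ 2
      = ∑ q : n, ∑ yz : Y × Z, ‖(V *ᵥ fun x' => x (q, x')) yz‖ ^ 2 := by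
        simp only [Fintype.sum_prod_type]
        refine Finset.sum_congr rfl fun q _ => Finset.sum_congr rfl fun y _ =>
          Finset.sum_congr rfl fun z _ => by rw [liftV_mulVec]
    _ ≤ ∑ q : n, opNorm V ^ 2 * ∑ x' : X, ‖x (q, x')‖ ^ 2 :=
        Finset.sum_le_sum fun q _ => sum_sq_mulVec_le V _
    _ = opNorm V ^ 2 * ∑ p : n × X, ‖x p‖ ^ 2 := by
        rw [← Finset.mul_sum, Fintype.sum_prod_type]

end structural

section main

variable {Z n X Y J : Type} [Fintype Z] [DecidableEq Z] [Fintype n] [DecidableEq n]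
  [Fintype X] [DecidableEq X] [Fintype Y] [DecidableEq Y] [Fintype J] [DecidableEq J]

lemma lExt_sub (Φ Ψ : SupOp X Y) (σ : Mat (n × X)) :
    lExt n (Φ - Ψ) σ = lExt n Φ σ - lExt n Ψ σ := by
  ext ⟨p, y⟩ ⟨q, y'⟩
  simp [lExt, LinearMap.sub_apply, Matrix.sub_apply]

lemma liftV_mul_apply (V : Matrix (Y × Z) X ℂ) (A : Matrix (n × X) J ℂ)
    (p : n) (y : Y) (z : Z) (j : J) :
    (liftV n V * A) ((p, y), z) j = ∑ x1, V (y, z) x1 * A (p, x1) j := by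
  simp only [Matrix.mul_apply, liftV, Matrix.of_apply, Fintype.sum_prod_type,
    ite_mul, zero_mul]
  rw [Finset.sum_eq_single p]
  · simp
  · intro q _ hq
    exact Finset.sum_eq_zero fun x' _ => by rw [if_neg (fun hh => hq hh.symm)]
  · intro hh; exact absurd (Finset.mem_univ p) hh

lemma mul_liftV_conjT_apply (V : Matrix (Y × Z) X ℂ) (A : Matrix J (n × X) ℂ)
    (j : J) (q : n) (y' : Y) (z' : Z) :
    (A * (liftV n V)ᴴ) j ((q, y'), z') = ∑ x2, A j (q, x2) * star (V (y', z') x2) := by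
  simp only [Matrix.mul_apply, Matrix.conjTranspose_apply, liftV, Matrix.of_apply,
    Fintype.sum_prod_type, apply_ite (star : ℂ → ℂ), star_zero, mul_ite, mul_zero]
  rw [Finset.sum_eq_single q]
  · simp
  · intro p _ hp
    exact Finset.sum_eq_zero fun x' _ => by rw [if_neg (fun hh => hp hh.symm)]
  · intro hh; exact absurd (Finset.mem_univ q) hh

set_option maxHeartbeats 1000000 in
lemma lExt_dilation (E : SupOp X Y) (V : Matrix (Y × Z) X ℂ)
    (hdil : ∀ σ, E σ = ptraceRight (V * σ * Vᴴ)) (σ : Mat (n × X)) :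
    lExt n E σ = ptraceRight (liftV n V * σ * (liftV n V)ᴴ) := by
  ext ⟨p, y⟩ ⟨q, y'⟩
  show E (Matrix.of fun a b => σ (p, a) (q, b)) y y' = _
  rw [hdil]
  show ∑ z, (V * (Matrix.of fun a b => σ (p, a) (q, b)) * Vᴴ) (y, z) (y', z)
      = ∑ z, (liftV n V * σ * (liftV n V)ᴴ) ((p, y), z) ((q, y'), z)
  refine Finset.sum_congr rfl fun z _ => ?_
  rw [mul_liftV_conjT_apply]
  have hstep : ∀ x2, (liftV n V * σ) ((p, y), z) (q, x2)
      = ∑ x1, V (y, z) x1 * σ (p, x1) (q, x2) :=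
    fun x2 => liftV_mul_apply V σ p y z (q, x2)
  rw [Finset.sum_congr rfl fun x2 _ => by rw [hstep]]
  simp only [Matrix.mul_apply, Matrix.conjTranspose_apply, Matrix.of_apply]

lemma one_kron_mul_apply (U : Matrix Z Z ℂ) (A : Matrix (Y × Z) J ℂ)
    (i : Y) (z : Z) (j : J) :
    ((((1 : Matrix Y Y ℂ) ⊗ₖ U)) * A) (i, z) j = ∑ z1, U z z1 * A (i, z1) j := by
  simp only [Matrix.mul_apply, Matrix.kroneckerMap_apply, Matrix.one_apply,
    Fintype.sum_prod_type, ite_mul, zero_mul, one_mul, mul_ite, mul_zero]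
  rw [Finset.sum_eq_single i]
  · simp
  · intro y _ hy
    exact Finset.sum_eq_zero fun z1 _ => by
      rw [if_neg (fun hh => hy hh.symm)]
  · intro hh; exact absurd (Finset.mem_univ i) hh

lemma mul_one_kron_conjT_apply (U : Matrix Z Z ℂ) (A : Matrix J (Y × Z) ℂ)
    (j : J) (i : Y) (z : Z) :
    (A * (((1 : Matrix Y Y ℂ) ⊗ₖ U))ᴴ) j (i, z) = ∑ z2, A j (i, z2) * star (U z z2) := by
  simp only [Matrix.mul_apply, Matrix.conjTranspose_apply, Matrix.kroneckerMap_apply,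
    Matrix.one_apply, Fintype.sum_prod_type, apply_ite (star : ℂ → ℂ), star_zero,
    star_one, ite_mul, zero_mul, one_mul, mul_ite, mul_zero, star_mul']
  rw [Finset.sum_eq_single i]
  · simp
  · intro y _ hy
    exact Finset.sum_eq_zero fun z2 _ => by
      rw [if_neg (fun hh => hy hh.symm)]
  · intro hh; exact absurd (Finset.mem_univ i) hh

lemma kron_conjTranspose (A : Matrix Y Y ℂ) (B : Matrix Z Z ℂ) :
    (A ⊗ₖ B)ᴴ = Aᴴ ⊗ₖ Bᴴ := by
  ext ⟨i, j⟩ ⟨k, l⟩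
  simp [Matrix.conjTranspose_apply, Matrix.kroneckerMap_apply, star_mul', mul_comm]

lemma ptraceRight_kron_conj (U : Matrix Z Z ℂ) (hU : Uᴴ * U = 1) (M : Mat (Y × Z)) :
    ptraceRight (((1 : Matrix Y Y ℂ) ⊗ₖ U) * M * ((1 : Matrix Y Y ℂ) ⊗ₖ U)ᴴ)
      = ptraceRight M := by
  ext i j
  show ∑ z, (((1 : Matrix Y Y ℂ) ⊗ₖ U) * M * ((1 : Matrix Y Y ℂ) ⊗ₖ U)ᴴ) (i, z) (j, z)
      = ∑ z, M (i, z) (j, z)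
  have expand : ∀ z, (((1 : Matrix Y Y ℂ) ⊗ₖ U) * M * ((1 : Matrix Y Y ℂ) ⊗ₖ U)ᴴ) (i, z) (j, z)
      = ∑ z2, ∑ z1, U z z1 * M (i, z1) (j, z2) * star (U z z2) := by
    intro z
    rw [mul_one_kron_conjT_apply]
    refine Finset.sum_congr rfl fun z2 _ => ?_
    rw [one_kron_mul_apply, Finset.sum_mul]
  rw [Finset.sum_congr rfl fun z _ => expand z]
  calc ∑ z, ∑ z2, ∑ z1, U z z1 * M (i, z1) (j, z2) * star (U z z2)
      = ∑ z2, ∑ z1, M (i, z1) (j, z2) * (Uᴴ * U) z2 z1 := by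
        rw [Finset.sum_comm]
        refine Finset.sum_congr rfl fun z2 _ => ?_
        rw [Finset.sum_comm]
        refine Finset.sum_congr rfl fun z1 _ => ?_
        simp only [Matrix.mul_apply, Matrix.conjTranspose_apply, Finset.mul_sum]
        exact Finset.sum_congr rfl fun z _ => by ring
    _ = ∑ z, M (i, z) (j, z) := by
        rw [hU]
        simp [Matrix.one_apply, mul_ite, mul_one, mul_zero, Finset.sum_ite_eq,
          Finset.sum_ite_eq']

lemma conj_diff (L L' : Matrix J (n × X) ℂ) (σ : Mat (n × X)) :
    L * σ * Lᴴ - L' * σ * L'ᴴ = (L - L') * σ * Lᴴ + L' * σ * (L - L')ᴴ := by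
  rw [Matrix.conjTranspose_sub, Matrix.sub_mul, Matrix.sub_mul, Matrix.mul_sub]
  abel

set_option maxHeartbeats 1000000 in
lemma diamond_le_two_opNorm (E E' : SupOp X Y) (V V' : Matrix (Y × Z) X ℂ)
    (hV : Vᴴ * V = 1) (hV' : V'ᴴ * V' = 1)
    (hdil : ∀ σ, E σ = ptraceRight (V * σ * Vᴴ))
    (hdil' : ∀ σ, E' σ = ptraceRight (V' * σ * V'ᴴ)) :
    diamondNorm (E - E') ≤ 2 * opNorm (V - V') := by
  have hd0 : 0 ≤ opNorm (V - V') := opNorm_nonneg _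
  refine Real.iSup_le (fun k => ?_) (by linarith)
  refine Real.sSup_le (fun x hx => ?_) (by linarith)
  obtain ⟨σ, hσ1, rfl⟩ := hx
  have hσ0 : 0 ≤ traceNorm σ := traceNorm_nonneg σ
  rw [lExt_sub, lExt_dilation E V hdil, lExt_dilation E' V' hdil', ← map_sub]
  have hL : opNorm (liftV (Fin (k+1)) V) ≤ 1 :=
    opNorm_isometry_le _ (liftV_isometry V hV)
  have hL' : opNorm (liftV (Fin (k+1)) V') ≤ 1 :=
    opNorm_isometry_le _ (liftV_isometry V' hV')
  have hΔ : opNorm (liftV (Fin (k+1)) V - liftV (Fin (k+1)) V') ≤ opNorm (V - V') := by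
    rw [liftV_sub V V']
    exact opNorm_liftV_le (V - V')
  have h1 : traceNorm ((liftV (Fin (k+1)) V - liftV (Fin (k+1)) V') * σ *
      (liftV (Fin (k+1)) V)ᴴ) ≤ opNorm (V - V') := by
    calc traceNorm ((liftV (Fin (k+1)) V - liftV (Fin (k+1)) V') * σ * (liftV (Fin (k+1)) V)ᴴ)
        ≤ opNorm (liftV (Fin (k+1)) V - liftV (Fin (k+1)) V') *
            opNorm (liftV (Fin (k+1)) V) * traceNorm σ := traceNorm_conj_le _ _ _
      _ ≤ opNorm (V - V') * 1 * 1 := by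
          refine mul_le_mul (mul_le_mul hΔ hL (opNorm_nonneg _) hd0) hσ1 hσ0 (by linarith)
      _ = opNorm (V - V') := by ring
  have h2 : traceNorm (liftV (Fin (k+1)) V' * σ *
      (liftV (Fin (k+1)) V - liftV (Fin (k+1)) V')ᴴ) ≤ opNorm (V - V') := by
    calc traceNorm (liftV (Fin (k+1)) V' * σ * (liftV (Fin (k+1)) V - liftV (Fin (k+1)) V')ᴴ)
        ≤ opNorm (liftV (Fin (k+1)) V') *
            opNorm (liftV (Fin (k+1)) V - liftV (Fin (k+1)) V') * traceNorm σ :=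
          traceNorm_conj_le _ _ _
      _ ≤ 1 * opNorm (V - V') * 1 := by
          refine mul_le_mul (mul_le_mul hL' hΔ (opNorm_nonneg _) zero_le_one) hσ1 hσ0
            (by linarith)
      _ = opNorm (V - V') := by ring
  calc traceNorm (ptraceRight (liftV (Fin (k+1)) V * σ * (liftV (Fin (k+1)) V)ᴴ
        - liftV (Fin (k+1)) V' * σ * (liftV (Fin (k+1)) V')ᴴ))
      ≤ traceNorm (liftV (Fin (k+1)) V * σ * (liftV (Fin (k+1)) V)ᴴ
        - liftV (Fin (k+1)) V' * σ * (liftV (Fin (k+1)) V')ᴴ) := traceNorm_ptraceRight_le _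
    _ = traceNorm ((liftV (Fin (k+1)) V - liftV (Fin (k+1)) V') * σ * (liftV (Fin (k+1)) V)ᴴ
        + liftV (Fin (k+1)) V' * σ * (liftV (Fin (k+1)) V - liftV (Fin (k+1)) V')ᴴ) := by
        rw [conj_diff]
    _ ≤ _ := traceNorm_add_le _ _
    _ ≤ opNorm (V - V') + opNorm (V - V') := add_le_add h1 h2
    _ = 2 * opNorm (V - V') := by ring

end main

end DilAux

/-- continuity of the Stinespring dilation, upper bound.
If `V, V' : X → Y ⊗ Z` are isometric dilations (with common dilation space
`Z`) of the channels `E, E' : L(X) → L(Y)`, then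
`‖E − E'‖◇ ≤ 2 · min_U ‖(I_Y ⊗ U)V − V'‖∞`, the minimum being over all
unitaries `U` on `Z`. -/
theorem diamondNorm_le_two_mul_min_dilation_dist
    {X Y Z : Type} [Fintype X] [DecidableEq X] [Fintype Y] [DecidableEq Y]
    [Fintype Z] [DecidableEq Z]
    (E E' : SupOp X Y) (hE : IsChannel E) (hE' : IsChannel E')
    (V V' : Matrix (Y × Z) X ℂ)
    (hV : Vᴴ * V = 1) (hV' : V'ᴴ * V' = 1)
    (hdil : ∀ σ, E σ = ptraceRight (V * σ * Vᴴ))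
    (hdil' : ∀ σ, E' σ = ptraceRight (V' * σ * V'ᴴ)) :
    diamondNorm (E - E') ≤
      2 * sInf {x : ℝ | ∃ U : Matrix Z Z ℂ, U ∈ Matrix.unitaryGroup Z ℂ ∧
        x = opNorm ((1 : Matrix Y Y ℂ) ⊗ₖ U * V - V')} := by
  have hne : {x : ℝ | ∃ U : Matrix Z Z ℂ, U ∈ Matrix.unitaryGroup Z ℂ ∧
      x = opNorm ((1 : Matrix Y Y ℂ) ⊗ₖ U * V - V')}.Nonempty :=
    ⟨opNorm ((1 : Matrix Y Y ℂ) ⊗ₖ (1 : Matrix Z Z ℂ) * V - V'), 1, one_mem _, rfl⟩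
  have hkey : ∀ b ∈ {x : ℝ | ∃ U : Matrix Z Z ℂ, U ∈ Matrix.unitaryGroup Z ℂ ∧
      x = opNorm ((1 : Matrix Y Y ℂ) ⊗ₖ U * V - V')},
      diamondNorm (E - E') ≤ 2 * b := by
    rintro b ⟨U, hU, rfl⟩
    have hU1 : Uᴴ * U = 1 := by
      have h := Matrix.mem_unitaryGroup_iff'.mp hU
      rwa [Matrix.star_eq_conjTranspose] at h
    have hkron : ((1 : Matrix Y Y ℂ)ᴴ ⊗ₖ Uᴴ) * ((1 : Matrix Y Y ℂ) ⊗ₖ U) = 1 := by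
      rw [← Matrix.mul_kronecker_mul, Matrix.conjTranspose_one, Matrix.one_mul, hU1,
        Matrix.one_kronecker_one]
    have hV2 : ((1 : Matrix Y Y ℂ) ⊗ₖ U * V)ᴴ * ((1 : Matrix Y Y ℂ) ⊗ₖ U * V) = 1 := by
      rw [Matrix.conjTranspose_mul, DilAux.kron_conjTranspose, Matrix.mul_assoc,
        ← Matrix.mul_assoc (((1 : Matrix Y Y ℂ)ᴴ ⊗ₖ Uᴴ)), hkron, Matrix.one_mul, hV]
    have hdil2 : ∀ σ, E σ = ptraceRight (((1 : Matrix Y Y ℂ) ⊗ₖ U * V) * σ *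
        ((1 : Matrix Y Y ℂ) ⊗ₖ U * V)ᴴ) := by
      intro σ
      rw [hdil σ]
      rw [show ((1 : Matrix Y Y ℂ) ⊗ₖ U * V) * σ * ((1 : Matrix Y Y ℂ) ⊗ₖ U * V)ᴴ
          = ((1 : Matrix Y Y ℂ) ⊗ₖ U) * (V * σ * Vᴴ) * ((1 : Matrix Y Y ℂ) ⊗ₖ U)ᴴ from by
        rw [Matrix.conjTranspose_mul]
        simp only [Matrix.mul_assoc]]
      rw [DilAux.ptraceRight_kron_conj U hU1]
    exact DilAux.diamond_le_two_opNorm E E' _ V' hV2 hV' hdil2 hdil'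
  have h2 : diamondNorm (E - E') / 2 ≤ sInf {x : ℝ | ∃ U : Matrix Z Z ℂ,
      U ∈ Matrix.unitaryGroup Z ℂ ∧ x = opNorm ((1 : Matrix Y Y ℂ) ⊗ₖ U * V - V')} :=
    le_csInf hne fun b hb => by linarith [hkey b hb]
  linarith
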